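/- (Fell's absorption principle for semigroups, second version; necessity.) Let P be a submonoid of a (discrete) group G and let V = {V_p}_{p∈P} be an isometric representation of P on a Hilbert space H. If there exists an injective unital *-homomorphism φ from 𝒯̄_λ(P) into B(ℋ̄ ⊗ H) with φ(L̄_p) = L̄_p ⊗ V_p for all p ∈ P, then V̇_a = V̇_b whenever a, b are neutral words over P with K(a) = K(b) ≠ ∅. -/

import Mathlib

noncomputable section
set_option synthInstance.maxHeartbeats 1000000
set_option maxHeartbeats 1000000
set_option linter.unusedVariables false

open scoped ENNReal

/-- `ℓ²(ι)` with complex coefficients. -/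
abbrev l2 (ι : Type*) : Type _ := lp (fun _ : ι => ℂ) 2

/-- The canonical orthonormal basis vector `δ_i` of `ℓ²(ι)`. -/
noncomputable def ket {ι : Type*} (i : ι) : l2 ι :=
  haveI := Classical.decEq ι
  lp.single 2 i 1

variable {G : Type*} [Group G]

/-- A word `a = (p₁, p₂, …, p_{2k-1}, p_{2k})` of even length over `P`, recorded as the list of
its consecutive pairs `(p₁,p₂), (p₃,p₄), …, (p_{2k-1},p_{2k})`. -/
abbrev Word (P : Submonoid G) := List (P × P)

/-- `ȧ = p₁⁻¹ p₂ ⋯ p_{2k-1}⁻¹ p_{2k} ∈ G`. -/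
def wordElem (P : Submonoid G) (w : Word P) : G :=
  (w.map (fun pq => ((pq.1 : G))⁻¹ * (pq.2 : G))).prod

/-- A word is neutral if `ȧ = e`. -/
def IsNeutral (P : Submonoid G) (w : Word P) : Prop := wordElem P w = 1

/-- `V̇_a = V_{p₁}^* V_{p₂} ⋯ V_{p_{2k-1}}^* V_{p_{2k}}`. -/
def dotted {A : Type*} [Monoid A] [Star A] (P : Submonoid G) (V : P → A) (w : Word P) : A :=
  (w.map (fun pq => star (V pq.1) * V pq.2)).prod

/-- The constructible right ideal `K(a) = {p ∈ P : L̇_a δ_p = δ_p}`, where `L` is the left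
regular representation of `P` on `ℓ²(P)`. -/
def KIdeal (P : Submonoid G) (L : P → (l2 P →L[ℂ] l2 P)) (w : Word P) : Set P :=
  {p : P | dotted P L w (ket p) = ket p}

/-- The index set `X = ⨿_{n ≥ 1} Pⁿ` underlying `ℋ̄ = ⊕_{n≥1} ℓ²(P)^{⊗n} ≅ ℓ²(X)`. -/
abbrev PTuples (P : Submonoid G) := Σ n : ℕ, Fin (n + 1) → P

/-- Coordinatewise left multiplication of a tuple by `p`; `L̄_p δ_x = δ_{p • x}`. -/
def pMul (P : Submonoid G) (p : P) (x : PTuples P) : PTuples P := ⟨x.1, fun i => p * x.2 i⟩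

/-- The element `δ_i ⊗ ξ` of the `ℓ²`-direct sum `⊕_{i ∈ ι} H`. -/
noncomputable def ketV {ι : Type*} {H : Type*} [NormedAddCommGroup H] [InnerProductSpace ℂ H]
    (i : ι) (ξ : H) : lp (fun _ : ι => H) 2 :=
  haveI := Classical.decEq ι
  lp.single 2 i ξ

/-!
The generators `L_p`, `L̄_p` and `L̄_p ⊗ V_p` all send a basis vector `δ_x ⊗ ξ` to
`δ_{p·x} ⊗ V_p ξ` with `x ↦ p·x` injective, so a word in them and their adjoints sends
`δ_x ⊗ ξ` either to `0` or to `δ_y ⊗ V̇_a ξ`, where `x ↦ y` is a partial map depending only on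
the word (`partialMove`). For a neutral word `a` this partial map is the identity on its domain,
which is `K(a)` on `P` and the set of tuples with all entries in `K(a)` on `X`. Hence
`K(a) = K(b)` forces `L̄̇_a = L̄̇_b`; the `*`-homomorphism carries this to
`(L̄ ⊗ V)̇_a = (L̄ ⊗ V)̇_b`, and evaluating at `δ_{(p)} ⊗ ξ` with `p ∈ K(a)` gives
`V̇_a ξ = V̇_b ξ`.
-/

open scoped InnerProductSpace
open Function

section ketV

variable {ι H : Type*} [NormedAddCommGroup H] [InnerProductSpace ℂ H]

lemma ketV_apply_self (i : ι) (ξ : H) : ketV i ξ i = ξ := by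
  classical
  exact lp.single_apply_self (E := fun _ : ι => H) 2 i ξ

lemma ketV_apply_of_ne {i j : ι} (h : j ≠ i) (ξ : H) : ketV i ξ j = 0 := by
  classical
  exact lp.single_apply_ne (E := fun _ : ι => H) 2 i ξ h

lemma inner_ketV_left (i : ι) (ξ : H) (f : lp (fun _ : ι => H) 2) :
    ⟪ketV i ξ, f⟫_ℂ = ⟪ξ, f i⟫_ℂ := by
  classical
  exact lp.inner_single_left (𝕜 := ℂ) (G := fun _ : ι => H) i ξ f

lemma ket_eq_ketV (i : ι) : ket i = ketV i (1 : ℂ) := rfl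

lemma ketV_eq_smul_ket (i : ι) (c : ℂ) : ketV i c = c • ket i := by
  classical
  change lp.single (E := fun _ : ι => ℂ) 2 i c = c • lp.single 2 i 1
  rw [← lp.single_smul, smul_eq_mul, mul_one]

lemma ket_apply_self (i : ι) : ket i i = 1 := ketV_apply_self i 1

lemma ket_ne_zero (i : ι) : ket i ≠ 0 := fun h => one_ne_zero (α := ℂ) <| by
  simpa [h] using ket_apply_self i

lemma ket_injective : Injective (ket : ι → l2 ι) := fun j i h => by
  by_contra hji
  exact one_ne_zero (α := ℂ) <| by
    rw [← ket_apply_self i, ← h, ket_eq_ketV, ketV_apply_of_ne (Ne.symm hji)]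

lemma elim_ket_eq_ket_iff (o : Option ι) (i : ι) : o.elim 0 ket = ket i ↔ o = some i := by
  cases o with
  | none => simpa [eq_comm] using ket_ne_zero i
  | some j => simpa using ket_injective.eq_iff

lemma ContinuousLinearMap.ext_ket {F : Type*} [AddCommMonoid F] [Module ℂ F] [TopologicalSpace F]
    [T2Space F] {A B : l2 ι →L[ℂ] F} (h : ∀ i, A (ket i) = B (ket i)) : A = B := by
  classical
  refine lp.ext_continuousLinearMap ENNReal.ofNat_ne_top fun i => ContinuousLinearMap.ext_ring ?_
  exact h i

end ketV

section adjoint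

variable {ι H : Type*} [NormedAddCommGroup H] [InnerProductSpace ℂ H] [CompleteSpace H]
  {A : lp (fun _ : ι => H) 2 →L[ℂ] lp (fun _ : ι => H) 2} {m : ι → ι} {U : H →L[ℂ] H}

lemma star_apply_apply_of_apply_ketV (hA : ∀ i ξ, A (ketV i ξ) = ketV (m i) (U ξ))
    (f : lp (fun _ : ι => H) 2) (k : ι) : star A f k = star U (f (m k)) := by
  refine ext_inner_left ℂ fun v => ?_
  simp only [← inner_ketV_left, ContinuousLinearMap.star_eq_adjoint,
    ContinuousLinearMap.adjoint_inner_right, hA]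

lemma star_apply_ketV (hm : Injective m) (hA : ∀ i ξ, A (ketV i ξ) = ketV (m i) (U ξ))
    (j : ι) (ξ : H) :
    star A (ketV j ξ) = (partialInv m j).elim 0 fun i => ketV i (star U ξ) := by
  refine lp.ext (funext fun k => ?_)
  rw [star_apply_apply_of_apply_ketV hA]
  rcases h : partialInv m j with _ | i
  · have hk : m k ≠ j := fun hk => by simp [← hk, partialInv_left hm] at h
    simp [ketV_apply_of_ne hk]
  · obtain rfl : m i = j := (hm.isPartialInv i j).mp h
    by_cases hki : k = i
    · simp [hki, ketV_apply_self]
    · simp [ketV_apply_of_ne hki, ketV_apply_of_ne (hm.ne hki)]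

end adjoint

section partialMove

variable {P : Submonoid G} {ι : Type*}

lemma dotted_cons {A : Type*} [Monoid A] [Star A] (V : P → A) (pq : P × P) (w : Word P) :
    dotted P V (pq :: w) = star (V pq.1) * V pq.2 * dotted P V w := by
  simp [dotted]

lemma map_dotted {A B F : Type*} [Monoid A] [Monoid B] [Star A] [Star B] [FunLike F A B]
    [MonoidHomClass F A B] [StarHomClass F A B] (f : F) (V : P → A) (w : Word P) :
    f (dotted P V w) = dotted P (fun p => f (V p)) w := by
  simp [dotted, map_list_prod, Function.comp_def, map_star]

/-- The partial map `x ↦ p₁⁻¹q₁ ⋯ pₖ⁻¹qₖ x` of a word `[(p₁,q₁), …, (pₖ,qₖ)]` on a set on which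
`P` acts injectively by `m`; it is defined at `x` when each successive `pᵢ⁻¹` can be applied. -/
def partialMove (m : P → ι → ι) : Word P → ι → Option ι
  | [], x => some x
  | pq :: w, x => (partialMove m w x).bind fun y => partialInv (m pq.1) (m pq.2 y)

variable {m : P → ι → ι}

lemma partialMove_cons_eq_some (hm : ∀ p, Injective (m p)) (pq : P × P) (w : Word P)
    (x y : ι) :
    partialMove m (pq :: w) x = some y ↔ ∃ z, partialMove m w x = some z ∧ m pq.1 y = m pq.2 z := by
  simp only [partialMove, Option.bind_eq_some_iff]
  exact exists_congr fun z => and_congr_right' ((hm pq.1).isPartialInv y _)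


lemma dotted_apply_ketV {H : Type*} [NormedAddCommGroup H] [InnerProductSpace ℂ H]
    [CompleteSpace H] (hm : ∀ p, Injective (m p))
    {A : P → (lp (fun _ : ι => H) 2 →L[ℂ] lp (fun _ : ι => H) 2)} {U : P → (H →L[ℂ] H)}
    (hA : ∀ p i ξ, A p (ketV i ξ) = ketV (m p i) (U p ξ)) (w : Word P) (x : ι) (ξ : H) :
    dotted P A w (ketV x ξ) = (partialMove m w x).elim 0 fun y => ketV y (dotted P U w ξ) := by
  induction w with
  | nil => simp [dotted, partialMove]
  | cons pq w ih =>
    rcases h : partialMove m w x with _ | y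
    · simp [dotted_cons, ih, h, partialMove]
    · simp only [dotted_cons, mul_apply_eq_comp, ih, h, Option.elim_some, hA,
        star_apply_ketV (hm pq.1) (hA pq.1), partialMove, Option.bind_some]

lemma dotted_apply_ket {A : P → (l2 ι →L[ℂ] l2 ι)} (hm : ∀ p, Injective (m p))
    (hA : ∀ p i, A p (ket i) = ket (m p i)) (w : Word P) (x : ι) :
    dotted P A w (ket x) = (partialMove m w x).elim 0 ket := by
  have hA' : ∀ p i c, A p (ketV i c) = ketV (m p i) ((fun _ => 1 : P → (ℂ →L[ℂ] ℂ)) p c) := by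
    simp [ketV_eq_smul_ket, hA]
  have hone : dotted P (fun _ => 1 : P → (ℂ →L[ℂ] ℂ)) w = 1 := by simp [dotted]
  rw [ket_eq_ketV, dotted_apply_ketV hm hA', hone]
  rfl

end partialMove

section leftMultiplication

variable {P : Submonoid G}

lemma coe_eq_of_partialMove_mul_eq_some {w : Word P} {x y : P}
    (h : partialMove (· * ·) w x = some y) : (y : G) = wordElem P w * x := by
  induction w generalizing y with
  | nil => simp_all [partialMove, wordElem]
  | cons pq w ih =>
    obtain ⟨z, hz, hyz⟩ := (partialMove_cons_eq_some mul_right_injective pq w x y).1 h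
    have hyz : (pq.1 : G) * y = pq.2 * z := by exact_mod_cast hyz
    rw [eq_inv_mul_of_mul_eq hyz, ih hz]
    simp [wordElem, mul_assoc]

lemma mem_KIdeal_iff {L : P → (l2 P →L[ℂ] l2 P)} (hL : ∀ p q : P, L p (ket q) = ket (p * q))
    {w : Word P} {x : P} : x ∈ KIdeal P L w ↔ partialMove (· * ·) w x = some x :=
  (congrArg (· = ket x) (dotted_apply_ket mul_right_injective hL w x)).to_iff.trans
    (elim_ket_eq_ket_iff _ x)

lemma partialMove_mul_eq_of_KIdeal_eq {L : P → (l2 P →L[ℂ] l2 P)}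
    (hL : ∀ p q : P, L p (ket q) = ket (p * q)) {w w' : Word P} (hw : IsNeutral P w)
    (hw' : IsNeutral P w') (hK : KIdeal P L w = KIdeal P L w') :
    partialMove (· * ·) w = partialMove (· * ·) w' := by
  have key : ∀ {u : Word P}, IsNeutral P u → ∀ x y : P,
      partialMove (· * ·) u x = some y ↔ y = x ∧ x ∈ KIdeal P L u := by
    intro u hu x y
    refine ⟨fun h => ?_, by rintro ⟨rfl, hy⟩; exact (mem_KIdeal_iff hL).1 hy⟩
    obtain rfl : y = x := Subtype.ext <| by
      rw [coe_eq_of_partialMove_mul_eq_some h, show wordElem P u = 1 from hu, one_mul]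
    exact ⟨rfl, (mem_KIdeal_iff hL).2 h⟩
  funext x
  exact Option.ext fun y => by rw [key hw, key hw', hK]

lemma pMul_eq_pMul_iff (p q : P) (y : PTuples P) {n : ℕ} (g : Fin (n + 1) → P) :
    pMul P p y = pMul P q ⟨n, g⟩ ↔ ∃ f, y = ⟨n, f⟩ ∧ ∀ i, p * f i = q * g i := by
  obtain ⟨k, f⟩ := y
  simp only [pMul, Sigma.mk.injEq]
  constructor
  · rintro ⟨rfl, h⟩
    exact ⟨f, ⟨rfl, HEq.rfl⟩, congrFun (eq_of_heq h)⟩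
  · rintro ⟨f', ⟨rfl, h⟩, hf'⟩
    obtain rfl := eq_of_heq h
    exact ⟨rfl, heq_of_eq (funext hf')⟩

lemma pMul_injective (p : P) : Injective (pMul P p) := by
  rintro x ⟨n, g⟩ h
  obtain ⟨f, rfl, hf⟩ := (pMul_eq_pMul_iff p p x g).1 h
  rw [funext fun i => mul_left_cancel (hf i)]

lemma partialMove_pMul_eq_some (w : Word P) {n : ℕ} (f : Fin (n + 1) → P) (y : PTuples P) :
    partialMove (pMul P) w ⟨n, f⟩ = some y ↔
      ∃ g, y = ⟨n, g⟩ ∧ ∀ i, partialMove (· * ·) w (f i) = some (g i) := by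
  induction w generalizing y with
  | nil =>
    simp only [partialMove, Option.some.injEq]
    exact ⟨fun h => ⟨f, h.symm, fun _ => rfl⟩, fun ⟨g, hy, hg⟩ => hy ▸ by rw [funext hg]⟩
  | cons pq w ih =>
    simp only [partialMove_cons_eq_some pMul_injective, partialMove_cons_eq_some
      mul_right_injective]
    constructor
    · rintro ⟨_, hz, h⟩
      obtain ⟨g, rfl, hg⟩ := (ih _).1 hz
      obtain ⟨f', rfl, hf'⟩ := (pMul_eq_pMul_iff _ _ y g).1 h
      exact ⟨f', rfl, fun i => ⟨g i, hg i, hf' i⟩⟩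
    · rintro ⟨g, rfl, h⟩
      choose z hz using h
      exact ⟨⟨n, z⟩, (ih _).2 ⟨z, rfl, fun i => (hz i).1⟩,
        (pMul_eq_pMul_iff _ _ _ z).2 ⟨g, rfl, fun i => (hz i).2⟩⟩

lemma partialMove_pMul_eq_of_partialMove_mul_eq {w w' : Word P}
    (h : partialMove (· * ·) w = partialMove (· * ·) w') :
    partialMove (pMul P) w = partialMove (pMul P) w' := by
  funext ⟨n, f⟩
  exact Option.ext fun y => by rw [partialMove_pMul_eq_some, partialMove_pMul_eq_some, h]

end leftMultiplication

lemma dotted_eq_of_starAlgHom {P : Submonoid G} {R A B : Type*} [CommSemiring R] [StarRing R]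
    [Semiring A] [StarRing A] [Algebra R A] [StarModule R A] [Semiring B] [Algebra R B] [Star B]
    {S : StarSubalgebra R A} (φ : S →⋆ₐ[R] B) {a : P → A} {b : P → B} (ha : ∀ p, a p ∈ S)
    (hφ : ∀ p h, φ ⟨a p, h⟩ = b p) {w w' : Word P} (h : dotted P a w = dotted P a w') :
    dotted P b w = dotted P b w' := by
  let a' : P → S := fun p => ⟨a p, ha p⟩
  have hb : b = fun p => φ (a' p) := funext fun p => (hφ p (ha p)).symm
  have hcoe : ∀ u, ((dotted P a' u : S) : A) = dotted P a u := map_dotted S.subtype a'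
  have ha' : dotted P a' w = dotted P a' w' := Subtype.ext (by rw [hcoe, hcoe, h])
  rw [hb, ← map_dotted, ← map_dotted, ha']

theorem fell_absorption_second_necessity_general (P : Submonoid G)
    (L : P → (l2 P →L[ℂ] l2 P))
    (hL : ∀ p q : P, L p (ket q) = ket (p * q))
    (Lbar : P → (l2 (PTuples P) →L[ℂ] l2 (PTuples P)))
    (hLbar : ∀ (p : P) (x : PTuples P), Lbar p (ket x) = ket (pMul P p x))
    {H : Type*} [NormedAddCommGroup H] [InnerProductSpace ℂ H] [CompleteSpace H]
    (V : P → (H →L[ℂ] H))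
    (T : P → (lp (fun _ : PTuples P => H) 2 →L[ℂ] lp (fun _ : PTuples P => H) 2))
    (hT : ∀ (p : P) (x : PTuples P) (ξ : H), T p (ketV x ξ) = ketV (pMul P p x) (V p ξ))
    (φ : (StarAlgebra.adjoin ℂ (Set.range Lbar)).topologicalClosure →⋆ₐ[ℂ]
        (lp (fun _ : PTuples P => H) 2 →L[ℂ] lp (fun _ : PTuples P => H) 2))
    (hφ : ∀ (p : P) (h : Lbar p ∈ (StarAlgebra.adjoin ℂ (Set.range Lbar)).topologicalClosure),
      φ ⟨Lbar p, h⟩ = T p) :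
    ∀ w w' : Word P, IsNeutral P w → IsNeutral P w' →
      KIdeal P L w = KIdeal P L w' → (KIdeal P L w).Nonempty →
      dotted P V w = dotted P V w' := by
  intro w w' hw hw' hK ⟨p, hp⟩
  have hLbar_eq : dotted P Lbar w = dotted P Lbar w' := ContinuousLinearMap.ext_ket fun x => by
    rw [dotted_apply_ket pMul_injective hLbar, dotted_apply_ket pMul_injective hLbar,
      partialMove_pMul_eq_of_partialMove_mul_eq (partialMove_mul_eq_of_KIdeal_eq hL hw hw' hK)]
  have hT_eq : dotted P T w = dotted P T w' :=
    dotted_eq_of_starAlgHom φ (fun p => StarSubalgebra.le_topologicalClosure _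
      (StarAlgebra.subset_adjoin ℂ _ (Set.mem_range_self p))) hφ hLbar_eq
  let x : PTuples P := ⟨0, fun _ => p⟩
  have hx : ∀ {u}, p ∈ KIdeal P L u → partialMove (pMul P) u x = some x := fun hu =>
    (partialMove_pMul_eq_some _ _ _).2 ⟨_, rfl, fun _ => (mem_KIdeal_iff hL).1 hu⟩
  ext ξ
  simpa [dotted_apply_ketV pMul_injective hT, hx hp, hx (hK ▸ hp), ketV_apply_self] using
    congrArg (fun A => A (ketV x ξ) x) hT_eq

/-- **Fell's absorption principle for semigroups (second version); necessity.**
Let `V` be an isometric representation of `P` on `H`.  If `L̄_p ↦ L̄_p ⊗ V_p` extends to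
an injective unital `*`-homomorphism of `𝒯̄_λ(P)` into `B(ℋ̄ ⊗ H)`, then `V̇_a = V̇_b`
whenever `a, b` are neutral words with `K(a) = K(b) ≠ ∅`. -/
theorem fell_absorption_second_necessity (P : Submonoid G)
    (L : P → (l2 P →L[ℂ] l2 P))
    (hL : ∀ p q : P, L p (ket q) = ket (p * q))
    (Lbar : P → (l2 (PTuples P) →L[ℂ] l2 (PTuples P)))
    (hLbar : ∀ (p : P) (x : PTuples P), Lbar p (ket x) = ket (pMul P p x))
    {H : Type*} [NormedAddCommGroup H] [InnerProductSpace ℂ H] [CompleteSpace H]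
    (V : P → (H →L[ℂ] H))
    (hV1 : V 1 = 1)
    (hVmul : ∀ p q : P, V (p * q) = V p * V q)
    (hViso : ∀ p : P, star (V p) * V p = 1)
    (T : P → (lp (fun _ : PTuples P => H) 2 →L[ℂ] lp (fun _ : PTuples P => H) 2))
    (hT : ∀ (p : P) (x : PTuples P) (ξ : H), T p (ketV x ξ) = ketV (pMul P p x) (V p ξ))
    (φ : (StarAlgebra.adjoin ℂ (Set.range Lbar)).topologicalClosure →⋆ₐ[ℂ]
        (lp (fun _ : PTuples P => H) 2 →L[ℂ] lp (fun _ : PTuples P => H) 2))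
    (hinj : Function.Injective φ)
    (hφ : ∀ (p : P) (h : Lbar p ∈ (StarAlgebra.adjoin ℂ (Set.range Lbar)).topologicalClosure),
      φ ⟨Lbar p, h⟩ = T p) :
    ∀ w w' : Word P, IsNeutral P w → IsNeutral P w' →
      KIdeal P L w = KIdeal P L w' → (KIdeal P L w).Nonempty →
      dotted P V w = dotted P V w' :=
  fell_absorption_second_necessity_general P L hL Lbar hLbar V T hT φ hφ
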